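/- For real x with |x| < 1: ∑_{n=1}^∞ (H_n^{(2)}/n) xⁿ = 3 Li₃(x) − ln(1−x)·Li₂(x) − 2 ∑_{n=1}^∞ (H_n/n²) xⁿ. -/

import Mathlib

/-!
Multiply the series `-log (1 - x) = ∑ xⁿ/n` and `Li₂(x) = ∑ xⁿ/n²` as a Cauchy product. With
`N = i + j`, the partial fraction decomposition
`1/(i j²) = 1/(N j²) + 1/(N² j) + 1/(N² i)` turns the coefficient of `x^N` into
`H_{N-1}^{(2)}/N + 2 H_{N-1}/N²`, which equals `H_N^{(2)}/N + 2 H_N/N² - 3/N³`.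
Summing over `N` gives `-log (1 - x) Li₂(x) = ∑ (H_N^{(2)}/N) x^N + 2 ∑ (H_N/N²) x^N - 3 Li₃(x)`.
-/

open Real Filter

/-- Generalized harmonic number `H_n^(m) = ∑_{j=1}^n 1/j^m`. -/
noncomputable def H (m n : ℕ) : ℝ := ∑ j ∈ Finset.range n, 1 / ((j : ℝ) + 1) ^ m

/-- Riemann zeta value `ζ(r) = ∑_{n=1}^∞ 1/n^r`. -/
noncomputable def zt (r : ℕ) : ℝ := ∑' n : ℕ, 1 / ((n : ℝ) + 1) ^ r

/-- Polylogarithm `Li_p(x)`, with `Li_1(x) = -log(1-x)`. -/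
noncomputable def Li (p : ℕ) (x : ℝ) : ℝ :=
  if p = 1 then -Real.log (1 - x) else ∑' n : ℕ, x ^ (n + 1) / ((n : ℝ) + 1) ^ p

open Finset Finset.Nat

lemma H_succ (m n : ℕ) : H m (n + 1) = H m n + 1 / ((n : ℝ) + 1) ^ m :=
  sum_range_succ _ _

lemma H_nonneg (m n : ℕ) : 0 ≤ H m n :=
  sum_nonneg fun _ _ => by positivity

lemma H_le (m n : ℕ) : H m n ≤ n :=
  calc H m n ≤ ∑ _j ∈ range n, (1 : ℝ) :=
        sum_le_sum fun j _ => div_le_one_of_le₀ (one_le_pow₀ (by simp)) (by positivity)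
    _ = n := by simp

lemma abs_H_div_pow_le_one (m n : ℕ) {k : ℕ} (hk : k ≠ 0) :
    |H m (n + 1) / ((n : ℝ) + 1) ^ k| ≤ 1 := by
  rw [abs_of_nonneg (div_nonneg (H_nonneg _ _) (by positivity))]
  refine div_le_one_of_le₀ ?_ (by positivity)
  calc H m (n + 1) ≤ (n : ℝ) + 1 := by exact_mod_cast H_le m (n + 1)
    _ ≤ ((n : ℝ) + 1) ^ k := le_self_pow₀ (by simp) hk

lemma summable_norm_mul_pow_succ {x : ℝ} (hx : |x| < 1) {c : ℕ → ℝ} (hc : ∀ n, |c n| ≤ 1) :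
    Summable fun n => ‖c n * x ^ (n + 1)‖ := by
  refine Summable.of_norm_bounded ((summable_geometric_of_lt_one (abs_nonneg x) hx).mul_left |x|)
    fun n => ?_
  calc ‖‖c n * x ^ (n + 1)‖‖ = |c n| * |x| ^ (n + 1) := by simp
    _ ≤ |x| ^ (n + 1) := mul_le_of_le_one_left (by positivity) (hc n)
    _ = |x| * |x| ^ n := pow_succ' _ _

lemma summable_norm_pow_succ_div {x : ℝ} (hx : |x| < 1) (p : ℕ) :
    Summable fun n : ℕ => ‖x ^ (n + 1) / ((n : ℝ) + 1) ^ p‖ := by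
  simp only [div_eq_inv_mul]
  refine summable_norm_mul_pow_succ hx fun n => ?_
  rw [abs_inv, abs_of_pos (by positivity)]
  exact inv_le_one_of_one_le₀ (one_le_pow₀ (by simp))

lemma summable_H_div_pow_mul_pow (m : ℕ) {k : ℕ} (hk : k ≠ 0) {x : ℝ} (hx : |x| < 1) :
    Summable fun n : ℕ => H m (n + 1) / ((n : ℝ) + 1) ^ k * x ^ (n + 1) :=
  (summable_norm_mul_pow_succ hx (abs_H_div_pow_le_one m · hk)).of_norm

lemma Li_of_ne_one {p : ℕ} (hp : p ≠ 1) (x : ℝ) :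
    Li p x = ∑' n : ℕ, x ^ (n + 1) / ((n : ℝ) + 1) ^ p :=
  if_neg hp

lemma one_div_mul_sq_eq {K : Type*} [Field K] {a b : K} (ha : a ≠ 0) (hb : b ≠ 0)
    (hab : a + b ≠ 0) :
    1 / (a * b ^ 2) = 1 / ((a + b) * b ^ 2) + 1 / ((a + b) ^ 2 * b) + 1 / ((a + b) ^ 2 * a) := by
  field_simp
  ring

lemma sum_antidiagonal_fst {M : Type*} [AddCommMonoid M] (g : ℕ → M) (n : ℕ) :
    ∑ p ∈ antidiagonal n, g p.1 = ∑ k ∈ range (n + 1), g k :=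
  sum_antidiagonal_eq_sum_range_succ_mk (fun p => g p.1) n

lemma sum_antidiagonal_snd {M : Type*} [AddCommMonoid M] (g : ℕ → M) (n : ℕ) :
    ∑ p ∈ antidiagonal n, g p.2 = ∑ k ∈ range (n + 1), g k := by
  rw [← sum_antidiagonal_fst g n]
  exact sum_antidiagonal_swap (f := fun p => g p.1)

lemma sum_antidiagonal_one_div_mul_sq (n : ℕ) :
    ∑ p ∈ antidiagonal n, 1 / (((p.1 : ℝ) + 1) * ((p.2 : ℝ) + 1) ^ 2)
      = H 2 (n + 1) / ((n : ℝ) + 2) + 2 * H 1 (n + 1) / ((n : ℝ) + 2) ^ 2 := by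
  have hsplit : ∀ p ∈ antidiagonal n, 1 / (((p.1 : ℝ) + 1) * ((p.2 : ℝ) + 1) ^ 2)
      = 1 / (((n : ℝ) + 2) * ((p.2 : ℝ) + 1) ^ 2) + 1 / (((n : ℝ) + 2) ^ 2 * ((p.2 : ℝ) + 1))
        + 1 / (((n : ℝ) + 2) ^ 2 * ((p.1 : ℝ) + 1)) := by
    intro p hp
    have hN : (n : ℝ) + 2 = ((p.1 : ℝ) + 1) + ((p.2 : ℝ) + 1) := by
      rw [← mem_antidiagonal.mp hp]; push_cast; ring
    rw [hN]
    exact one_div_mul_sq_eq (by positivity) (by positivity) (by positivity)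
  rw [sum_congr rfl hsplit, sum_add_distrib, sum_add_distrib,
    sum_antidiagonal_snd (fun k => 1 / (((n : ℝ) + 2) * ((k : ℝ) + 1) ^ 2)),
    sum_antidiagonal_snd (fun k => 1 / (((n : ℝ) + 2) ^ 2 * ((k : ℝ) + 1))),
    sum_antidiagonal_fst (fun k => 1 / (((n : ℝ) + 2) ^ 2 * ((k : ℝ) + 1)))]
  simp only [H, sum_div, mul_sum, ← sum_add_distrib]
  refine sum_congr rfl fun k _ => ?_
  field_simp
  ring

lemma H_div_add_H_div_sq_succ (n : ℕ) :
    H 2 (n + 1) / ((n : ℝ) + 2) + 2 * H 1 (n + 1) / ((n : ℝ) + 2) ^ 2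
      = H 2 (n + 2) / ((n : ℝ) + 2) + 2 * (H 1 (n + 2) / ((n : ℝ) + 2) ^ 2)
        - 3 / ((n : ℝ) + 2) ^ 3 := by
  rw [H_succ 2 (n + 1), H_succ 1 (n + 1)]
  push_cast
  field_simp
  ring

lemma sum_antidiagonal_pow_div_mul_pow_div_sq (x : ℝ) (n : ℕ) :
    ∑ p ∈ antidiagonal n, x ^ (p.1 + 1) / ((p.1 : ℝ) + 1) * (x ^ (p.2 + 1) / ((p.2 : ℝ) + 1) ^ 2)
      = x ^ (n + 2) * (H 2 (n + 2) / ((n : ℝ) + 2) + 2 * (H 1 (n + 2) / ((n : ℝ) + 2) ^ 2)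
        - 3 / ((n : ℝ) + 2) ^ 3) := by
  have hterm : ∀ p ∈ antidiagonal n,
      x ^ (p.1 + 1) / ((p.1 : ℝ) + 1) * (x ^ (p.2 + 1) / ((p.2 : ℝ) + 1) ^ 2)
        = x ^ (n + 2) * (1 / (((p.1 : ℝ) + 1) * ((p.2 : ℝ) + 1) ^ 2)) := by
    intro p hp
    have hexp : p.1 + 1 + (p.2 + 1) = n + 2 := by rw [← mem_antidiagonal.mp hp]; ring
    rw [div_mul_div_comm, ← pow_add, hexp, mul_one_div]
  rw [sum_congr rfl hterm, ← mul_sum, sum_antidiagonal_one_div_mul_sq, H_div_add_H_div_sq_succ]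

lemma neg_log_mul_Li_two {x : ℝ} (hx : |x| < 1) :
    -log (1 - x) * Li 2 x
      = ∑' n : ℕ, (H 2 (n + 1) / ((n : ℝ) + 1) * x ^ (n + 1)
          + 2 * (H 1 (n + 1) / ((n : ℝ) + 1) ^ 2 * x ^ (n + 1))
          - 3 * (x ^ (n + 1) / ((n : ℝ) + 1) ^ 3)) := by
  set f : ℕ → ℝ := fun n => H 2 (n + 1) / ((n : ℝ) + 1) * x ^ (n + 1)
    + 2 * (H 1 (n + 1) / ((n : ℝ) + 1) ^ 2 * x ^ (n + 1)) - 3 * (x ^ (n + 1) / ((n : ℝ) + 1) ^ 3)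
  have hH2 : Summable fun n : ℕ => H 2 (n + 1) / ((n : ℝ) + 1) * x ^ (n + 1) := by
    simpa using summable_H_div_pow_mul_pow 2 one_ne_zero hx
  have hf : Summable f := (hH2.add ((summable_H_div_pow_mul_pow 1 two_ne_zero hx).mul_left 2)).sub
    ((summable_norm_pow_succ_div hx 3).of_norm.mul_left 3)
  -- the Cauchy product starts at `x²`; the `x¹` coefficient `1 + 2 - 3` of the series vanishes
  have hf0 : f 0 = 0 := by norm_num [f, H]; ring
  rw [hf.tsum_eq_zero_add, hf0, zero_add, ← (hasSum_pow_div_log_of_abs_lt_one hx).tsum_eq,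
    Li_of_ne_one (by norm_num), tsum_mul_tsum_eq_tsum_sum_antidiagonal_of_summable_norm
      (by simpa using summable_norm_pow_succ_div hx 1) (summable_norm_pow_succ_div hx 2)]
  refine tsum_congr fun n => ?_
  rw [sum_antidiagonal_pow_div_mul_pow_div_sq]
  simp only [f]
  push_cast
  ring

theorem stmt16 (x : ℝ) (hx : |x| < 1) :
    ∑' n : ℕ, H 2 (n + 1) / ((n : ℝ) + 1) * x ^ (n + 1)
      = 3 * Li 3 x - Real.log (1 - x) * Li 2 x
        - 2 * ∑' n : ℕ, H 1 (n + 1) / ((n : ℝ) + 1) ^ 2 * x ^ (n + 1) := by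
  have hH2 : Summable fun n : ℕ => H 2 (n + 1) / ((n : ℝ) + 1) * x ^ (n + 1) := by
    simpa using summable_H_div_pow_mul_pow 2 one_ne_zero hx
  have hH1 := summable_H_div_pow_mul_pow 1 two_ne_zero hx
  have hLi3 := (summable_norm_pow_succ_div hx 3).of_norm
  have hprod := neg_log_mul_Li_two hx
  rw [(hH2.add (hH1.mul_left 2)).tsum_sub (hLi3.mul_left 3), hH2.tsum_add (hH1.mul_left 2),
    tsum_mul_left, tsum_mul_left, ← Li_of_ne_one (by norm_num)] at hprod
  linarith
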